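/- Let S be an irreducible numerical semigroup whose ratio r(S) satisfies r(S) < F(S)/2. Then (S \ {r(S)}) ∪ {F(S) - r(S)} is an irreducible numerical semigroup with the same Frobenius number as S and ratio strictly greater than r(S). -/

import Mathlib

/-- A numerical semigroup: a cofinite submonoid of (ℕ, +). -/
def IsNumericalSemigroup (S : Set ℕ) : Prop :=
  0 ∈ S ∧ (∀ a ∈ S, ∀ b ∈ S, a + b ∈ S) ∧ Sᶜ.Finite

/-- `m` is the multiplicity of `S`: its least positive element. -/
def HasMultiplicity (S : Set ℕ) (m : ℕ) : Prop :=
  m ∈ S ∧ 0 < m ∧ ∀ s ∈ S, 0 < s → m ≤ s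

/-- `F` is the Frobenius number of `S`: the largest non-element. -/
def HasFrobenius (S : Set ℕ) (F : ℕ) : Prop :=
  F ∉ S ∧ ∀ x : ℕ, F < x → x ∈ S

/-- `S` is an irreducible numerical semigroup: it is not the intersection of
two numerical semigroups properly containing it. -/
def IsIrreducibleNS (S : Set ℕ) : Prop :=
  IsNumericalSemigroup S ∧
    ¬ ∃ S₁ S₂ : Set ℕ, IsNumericalSemigroup S₁ ∧ IsNumericalSemigroup S₂ ∧
      S ⊂ S₁ ∧ S ⊂ S₂ ∧ S = S₁ ∩ S₂

/-!
An irreducible numerical semigroup `S` with Frobenius number `F` is exactly one satisfying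
`F - x ∈ S` for every gap `x ∉ S` with `x ≠ F` and `2 * x ≠ F` (symmetric or pseudo-symmetric).
Removing the ratio `r` and adding `F - r` keeps this property: the only new gap is `r`, whose
partner `F - r` is added. Closure under addition holds because the elements of `S` below `r` are
multiples of `m`, so `r` is not a sum of two of them, and a sum `a + (F - r)` with `a < r`
that were a gap would force `r - a ∈ S` by symmetry, i.e. `r = a + (r - a)` with both summands
multiples of `m`. The multiplicity stays `m`, and the new ratio is either an old element
other than `r` that is not a multiple of `m`, or `F - r > r`.
-/

variable {S : Set ℕ} {F m r : ℕ}

lemma HasFrobenius.le_of_notMem (hF : HasFrobenius S F) {x : ℕ} (hx : x ∉ S) : x ≤ F :=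
  not_lt.mp fun h => hx (hF.2 x h)

lemma HasMultiplicity.unique {m' : ℕ} (hm : HasMultiplicity S m) (hm' : HasMultiplicity S m') :
    m = m' :=
  le_antisymm (hm.2.2 m' hm'.1 hm'.2.1) (hm'.2.2 m hm.1 hm.2.1)

namespace IsNumericalSemigroup

lemma insert_of_add_mem (hS : IsNumericalSemigroup S) {b : ℕ} (hbb : b + b ∈ S)
    (hbS : ∀ s ∈ S, 0 < s → b + s ∈ S) : IsNumericalSemigroup (insert b S) := by
  obtain ⟨h0, hadd, hfin⟩ := hS
  have hb : ∀ s ∈ S, b + s ∈ insert b S := by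
    intro s hs
    rcases Nat.eq_zero_or_pos s with rfl | hpos
    · exact (add_zero b).symm ▸ Set.mem_insert b S
    · exact Set.mem_insert_of_mem _ (hbS s hs hpos)
  refine ⟨Set.mem_insert_of_mem _ h0, ?_,
    hfin.subset (Set.compl_subset_compl.mpr (Set.subset_insert _ _))⟩
  rintro x (rfl | hx) y (rfl | hy)
  · exact Set.mem_insert_of_mem _ hbb
  · exact hb y hy
  · rw [add_comm]
    exact hb x hx
  · exact Set.mem_insert_of_mem _ (hadd x hx y hy)

lemma union_Ioi (hS : IsNumericalSemigroup S) (b : ℕ) :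
    IsNumericalSemigroup (S ∪ Set.Ioi b) := by
  obtain ⟨h0, hadd, hfin⟩ := hS
  refine ⟨Or.inl h0, ?_, hfin.subset (Set.compl_subset_compl.mpr Set.subset_union_left)⟩
  rintro x (hx | hx) y (hy | hy)
  · exact Or.inl (hadd x hx y hy)
  all_goals
    right
    simp only [Set.mem_Ioi] at *
    omega

end IsNumericalSemigroup

namespace IsIrreducibleNS

/-- If `b` is the largest element of `T \ S`, then `S` is the intersection of `insert b S`
and `S ∪ (b, ∞)`. -/
theorem eq_of_subset (hS : IsIrreducibleNS S) (hF : HasFrobenius S F) {T : Set ℕ}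
    (hT : IsNumericalSemigroup T) (hST : S ⊆ T) (hFT : F ∉ T) : T = S := by
  by_contra hne
  have hfin : (T \ S).Finite := hS.1.2.2.subset fun x hx => hx.2
  have hnon : (T \ S).Nonempty := Set.sdiff_nonempty.mpr fun h => hne (h.antisymm hST)
  obtain ⟨b, ⟨hbT, hbS⟩, hbmax⟩ := Set.exists_max_image _ id hfin hnon
  have habove : ∀ x ∈ T, b < x → x ∈ S := fun x hx hbx =>
    by_contra fun hxS => (hbmax x ⟨hx, hxS⟩).not_gt hbx
  have hbF : b < F := (hF.le_of_notMem hbS).lt_of_ne fun h => hFT (h ▸ hbT)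
  have hb0 : 0 < b := Nat.pos_of_ne_zero fun h => hbS (h ▸ hS.1.1)
  have hS₁ : IsNumericalSemigroup (insert b S) :=
    hS.1.insert_of_add_mem (habove _ (hT.2.1 b hbT b hbT) (by omega))
      fun s hs hs0 => habove _ (hT.2.1 b hbT s (hST hs)) (by omega)
  have hsub₂ : S ⊂ S ∪ Set.Ioi b :=
    (Set.ssubset_iff_of_subset Set.subset_union_left).mpr ⟨F, Or.inr hbF, hF.1⟩
  refine hS.2 ⟨_, _, hS₁, hS.1.union_Ioi b, Set.ssubset_insert hbS, hsub₂, ?_⟩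
  ext x
  simp only [Set.mem_inter_iff, Set.mem_insert_iff, Set.mem_union, Set.mem_Ioi]
  constructor
  · intro hx
    exact ⟨Or.inr hx, Or.inl hx⟩
  · rintro ⟨rfl | hx, hx' | hx'⟩ <;> first | assumption | omega

/-- A largest gap `k` violating the conclusion satisfies `2 * k > F` and `k + s ∈ S` for
`s ∈ S \ {0}`, so `insert k S` is a numerical semigroup avoiding `F`. -/
theorem sub_mem (hS : IsIrreducibleNS S) (hF : HasFrobenius S F) {x : ℕ} (hxS : x ∉ S)
    (hxF : x ≠ F) (hx2 : 2 * x ≠ F) : F - x ∈ S := by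
  by_contra hFx
  set A := {x | x ∉ S ∧ x ≠ F ∧ 2 * x ≠ F ∧ F - x ∉ S}
  have hfin : A.Finite := hS.1.2.2.subset fun x hx => hx.1
  obtain ⟨k, ⟨hkS, hkF, hk2, hFk⟩, hkmax⟩ :=
    Set.exists_max_image A id hfin ⟨x, hxS, hxF, hx2, hFx⟩
  have hk0 : 0 < k := Nat.pos_of_ne_zero fun h => hkS (h ▸ hS.1.1)
  have hkF' : k < F := (hF.le_of_notMem hkS).lt_of_ne hkF
  have h2k : F < 2 * k := by
    have : F - k ≤ k :=
      hkmax (F - k) ⟨hFk, by omega, by omega, by rwa [Nat.sub_sub_self hkF'.le]⟩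
    omega
  have hadd : ∀ s ∈ S, 0 < s → k + s ∈ S := by
    intro s hs hs0
    by_contra hks
    have hksF := hF.le_of_notMem hks
    have hFks : F - (k + s) ∉ S := fun h => hFk <| by
      rw [show F - k = F - (k + s) + s by omega]
      exact hS.1.2.1 _ h s hs
    have : k + s ≤ k := hkmax (k + s) ⟨hks, fun h => hFk (by rwa [← h, Nat.add_sub_cancel_left]),
      by omega, hFks⟩
    omega
  have hins := hS.eq_of_subset hF (hS.1.insert_of_add_mem (hF.2 _ (by omega)) hadd)
    (Set.subset_insert k S) fun h => h.elim (fun h => hkF h.symm) hF.1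
  exact hkS (hins ▸ Set.mem_insert k S)

end IsIrreducibleNS

theorem isIrreducibleNS_of_sub_mem (hS : IsNumericalSemigroup S) (hF : HasFrobenius S F)
    (hsym : ∀ x, x ∉ S → x ≠ F → 2 * x ≠ F → F - x ∈ S) : IsIrreducibleNS S := by
  have hmem_of_superset : ∀ T, IsNumericalSemigroup T → S ⊂ T → F ∈ T := by
    intro T hT hST
    obtain ⟨x, hxT, hxS⟩ := Set.exists_of_ssubset hST
    by_cases h2 : 2 * x = F
    · rw [← h2, two_mul]
      exact hT.2.1 x hxT x hxT
    by_cases hxF : x = F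
    · exact hxF ▸ hxT
    rw [← Nat.add_sub_cancel' (hF.le_of_notMem hxS)]
    exact hT.2.1 x hxT _ (hST.1 (hsym x hxS hxF h2))
  refine ⟨hS, fun ⟨T₁, T₂, hT₁, hT₂, hST₁, hST₂, hS₁₂⟩ => hF.1 ?_⟩
  rw [hS₁₂]
  exact ⟨hmem_of_superset T₁ hT₁ hST₁, hmem_of_superset T₂ hT₂ hST₂⟩

def HasRatio (S : Set ℕ) (m r : ℕ) : Prop :=
  r ∈ S ∧ ¬ m ∣ r ∧ ∀ s ∈ S, ¬ m ∣ s → r ≤ s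

namespace HasRatio

lemma pos (hr : HasRatio S m r) : 0 < r :=
  Nat.pos_of_ne_zero fun h => hr.2.1 (h ▸ dvd_zero m)

lemma dvd_of_lt (hr : HasRatio S m r) {s : ℕ} (hs : s ∈ S) (hsr : s < r) : m ∣ s :=
  by_contra fun hd => (hr.2.2 s hs hd).not_gt hsr

lemma add_ne (hr : HasRatio S m r) {a b : ℕ} (ha : a ∈ S) (hb : b ∈ S) (har : a ≠ r)
    (hbr : b ≠ r) : a + b ≠ r := by
  intro hab
  apply hr.2.1
  rw [← hab]
  exact dvd_add (hr.dvd_of_lt ha (by omega)) (hr.dvd_of_lt hb (by omega))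

lemma multiplicity_lt (hr : HasRatio S m r) (hm : HasMultiplicity S m) : m < r :=
  (hm.2.2 r hr.1 hr.pos).lt_of_ne fun h => hr.2.1 (h ▸ dvd_rfl)

end HasRatio

def ratioSwap (S : Set ℕ) (F r : ℕ) : Set ℕ :=
  (S \ {r}) ∪ {F - r}

lemma mem_ratioSwap {x : ℕ} : x ∈ ratioSwap S F r ↔ (x ∈ S ∧ x ≠ r) ∨ x = F - r := Iff.rfl

lemma add_sub_mem_ratioSwap (hS : IsIrreducibleNS S) (hF : HasFrobenius S F)
    (hr : HasRatio S m r) (hlt : 2 * r < F) {a : ℕ} (ha : a ∈ S) (har : a ≠ r) :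
    a + (F - r) ∈ ratioSwap S F r := by
  rw [mem_ratioSwap]
  rcases Nat.eq_zero_or_pos a with rfl | ha0
  · exact Or.inr (zero_add _)
  refine Or.inl ⟨by_contra fun hx => ?_, by omega⟩
  have har' : a < r := by have := hF.le_of_notMem hx; omega
  have hsub : r - a ∈ S := by
    have := hS.sub_mem hF hx (by omega) (by omega)
    rwa [show F - (a + (F - r)) = r - a by omega] at this
  exact hr.add_ne ha hsub har (by omega) (by omega)

theorem isNumericalSemigroup_ratioSwap (hS : IsIrreducibleNS S) (hF : HasFrobenius S F)
    (hr : HasRatio S m r) (hlt : 2 * r < F) : IsNumericalSemigroup (ratioSwap S F r) := by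
  refine ⟨Or.inl ⟨hS.1.1, hr.pos.ne⟩, ?_, ?_⟩
  · simp only [mem_ratioSwap]
    rintro a (⟨ha, har⟩ | rfl) b (⟨hb, hbr⟩ | rfl)
    · exact Or.inl ⟨hS.1.2.1 a ha b hb, hr.add_ne ha hb har hbr⟩
    · exact add_sub_mem_ratioSwap hS hF hr hlt ha har
    · rw [add_comm]
      exact add_sub_mem_ratioSwap hS hF hr hlt hb hbr
    · exact Or.inl ⟨hF.2 _ (by omega), by omega⟩
  · refine (hS.1.2.2.union (Set.finite_singleton r)).subset fun x hx => ?_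
    rw [Set.mem_compl_iff, mem_ratioSwap] at hx
    by_cases hxS : x ∈ S
    · exact Or.inr (not_not.mp fun hxr => hx (Or.inl ⟨hxS, hxr⟩))
    · exact Or.inl hxS

theorem hasFrobenius_ratioSwap (hF : HasFrobenius S F) (hr0 : 0 < r) (hrF : r < F) :
    HasFrobenius (ratioSwap S F r) F := by
  simp only [HasFrobenius, mem_ratioSwap]
  exact ⟨fun h => h.elim (fun h => hF.1 h.1) (by omega), fun x hx => Or.inl ⟨hF.2 x hx, by omega⟩⟩

theorem sub_mem_ratioSwap (hS : IsIrreducibleNS S) (hF : HasFrobenius S F) {x : ℕ}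
    (hx : x ∉ ratioSwap S F r) (hxF : x ≠ F) (hx2 : 2 * x ≠ F) : F - x ∈ ratioSwap S F r := by
  rw [mem_ratioSwap] at hx ⊢
  by_cases hxS : x ∈ S
  · exact Or.inr (by rw [not_not.mp fun hxr => hx (Or.inl ⟨hxS, hxr⟩)])
  · have hxF' := hF.le_of_notMem hxS
    exact Or.inl ⟨hS.sub_mem hF hxS hxF hx2, fun h => hx (Or.inr (by omega))⟩

theorem HasMultiplicity.ratioSwap (hm : HasMultiplicity S m) (hr : HasRatio S m r)
    (hlt : 2 * r < F) : HasMultiplicity (ratioSwap S F r) m := by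
  have hmr := hr.multiplicity_lt hm
  refine ⟨Or.inl ⟨hm.1, hmr.ne⟩, hm.2.1, ?_⟩
  rintro s (⟨hs, -⟩ | rfl) hs0
  · exact hm.2.2 s hs hs0
  · omega

theorem HasRatio.lt_of_ratioSwap {r' : ℕ} (hr : HasRatio S m r) (hlt : 2 * r < F)
    (hr' : HasRatio (ratioSwap S F r) m r') : r < r' := by
  rcases mem_ratioSwap.mp hr'.1 with ⟨hr'S, hr'r⟩ | rfl
  · exact (hr.2.2 r' hr'S hr'.2.1).lt_of_ne hr'r.symm
  · omega

theorem stmt16 (S : Set ℕ) (F m r : ℕ) (hS : IsIrreducibleNS S)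
    (hF : HasFrobenius S F) (hm : HasMultiplicity S m)
    (hr : r ∈ S ∧ ¬ m ∣ r ∧ ∀ s ∈ S, ¬ m ∣ s → r ≤ s)
    (hlt : 2 * r < F) :
    IsIrreducibleNS ((S \ {r}) ∪ {F - r}) ∧
      HasFrobenius ((S \ {r}) ∪ {F - r}) F ∧
      ∀ m' r' : ℕ, HasMultiplicity ((S \ {r}) ∪ {F - r}) m' →
        (r' ∈ (S \ {r}) ∪ {F - r} ∧ ¬ m' ∣ r' ∧
          ∀ s ∈ (S \ {r}) ∪ {F - r}, ¬ m' ∣ s → r' ≤ s) →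
        r < r' := by
  have hr : HasRatio S m r := hr
  have hFrob := hasFrobenius_ratioSwap hF hr.pos (by omega)
  refine ⟨isIrreducibleNS_of_sub_mem (isNumericalSemigroup_ratioSwap hS hF hr hlt) hFrob
    fun x => sub_mem_ratioSwap hS hF, hFrob, fun m' r' hm' hr' => ?_⟩
  obtain rfl := (hm.ratioSwap hr hlt).unique hm'
  exact hr.lt_of_ratioSwap hlt hr'
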